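/- arXiv:1808.09444 — 3 statements merged into one kernel-verified Lean document; each statement's English description precedes it below -/
import Mathlib

section
/- Let P be an n×n row substochastic matrix (all entries nonnegative and each row sum at most 1) whose spectral radius is strictly less than one, and let M_{l,m} denote the (l,m)-minor of I − Pᵀ, i.e., the determinant of the matrix obtained from I − Pᵀ by deleting row l and column m. Then for all indices l and m, (−1)^{l+m} M_{l,m} ≤ M_{m,m}. -/
/-!
Write `B = (1 - P)⁻¹`. The adjugate of `1 - Pᵀ` is the transpose of that of `1 - P`, so
`(-1)^(l+m) M_{l,m} = det (1 - P) * B l m` and it suffices that `det (1 - P) > 0` and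
`B l m ≤ B m m`. The determinant is positive by the intermediate value theorem: `det (1 - t • P)`
equals `1` at `t = 0` and never vanishes on `[0, 1]`, since `1/t` lies outside the spectrum.
Gelfand's formula gives `P ^ N → 0`, so `B = ∑ P ^ k` has nonnegative entries. Finally the
column `x = B e_m` solves `x = e_m + P x`; the positive part `w` of `x - x_m` then satisfies
`w ≤ P w` (row sums are at most `1`), hence `w = B (1 - P) w ≤ 0`.
-/

open Matrix Filter Topology Finset

section BanachAlgebra

variable {A : Type*} [NormedRing A] [NormedAlgebra ℂ A] [CompleteSpace A]

theorem tendsto_pow_atTop_nhds_zero_of_spectralRadius_lt_one {a : A}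
    (ha : spectralRadius ℂ a < 1) : Tendsto (a ^ ·) atTop (𝓝 0) := by
  obtain ⟨r, hρr, hr1⟩ := ENNReal.lt_iff_exists_nnreal_btwn.1 ha
  have hbound : ∀ᶠ N : ℕ in atTop, ‖a ^ N‖ ≤ (r : ℝ) ^ N := by
    filter_upwards [(spectrum.pow_nnnorm_pow_one_div_tendsto_nhds_spectralRadius a)
      |>.eventually_lt_const hρr, eventually_gt_atTop 0] with N hN hN0
    rw [one_div, ENNReal.rpow_inv_lt_iff (by positivity), ENNReal.rpow_natCast] at hN
    exact_mod_cast hN.le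
  exact squeeze_zero_norm' hbound
    (tendsto_pow_atTop_nhds_zero_of_lt_one r.2 (by exact_mod_cast hr1))

theorem tendsto_pow_atTop_nhds_zero_of_forall_spectrum_norm_lt_one {a : A}
    (h : ∀ μ ∈ spectrum ℂ a, ‖μ‖ < 1) : Tendsto (a ^ ·) atTop (𝓝 0) := by
  rcases subsingleton_or_nontrivial A with hA | hA
  · simp [Subsingleton.elim _ (0 : A)]
  · refine tendsto_pow_atTop_nhds_zero_of_spectralRadius_lt_one ?_
    simpa using spectrum.spectralRadius_lt_of_forall_lt a (r := 1) fun μ hμ => by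
      simpa [← NNReal.coe_lt_coe] using h μ hμ

end BanachAlgebra

theorem isUnit_one_sub_smul_of_forall_spectrum_norm_lt_one {A : Type*} [Ring A] [Algebra ℂ A]
    {a : A} (h : ∀ μ ∈ spectrum ℂ a, ‖μ‖ < 1) {t : ℂ} (ht : ‖t‖ ≤ 1) :
    IsUnit (1 - t • a) := by
  rcases eq_or_ne t 0 with rfl | ht0
  · simp
  have hinv : t⁻¹ ∉ spectrum ℂ a := fun hmem =>
    (h _ hmem).not_ge (by rw [norm_inv]; exact one_le_inv₀ (norm_pos_iff.2 ht0) |>.2 ht)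
  have hunit := ((Ne.isUnit ht0).map (algebraMap ℂ A)).mul (spectrum.notMem_iff.1 hinv)
  rwa [← Algebra.smul_def, smul_sub, Algebra.smul_def, ← map_mul, mul_inv_cancel₀ ht0,
    map_one] at hunit

theorem tendsto_sum_range_pow_of_mul_one_sub_eq_one {R : Type*} [Ring R] [TopologicalSpace R]
    [IsTopologicalRing R] {a b : R} (hb : b * (1 - a) = 1)
    (ha : Tendsto (a ^ ·) atTop (𝓝 0)) :
    Tendsto (fun N => ∑ k ∈ range N, a ^ k) atTop (𝓝 b) := by
  have hsum : ∀ N, ∑ k ∈ range N, a ^ k = b * (1 - a ^ N) := fun N => by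
    rw [← mul_neg_geom_sum, ← mul_assoc, hb, one_mul]
  simpa [hsum] using ((tendsto_const_nhds (x := (1 : R))).sub ha).const_mul b

namespace Matrix

variable {ι : Type*} [Fintype ι]

theorem max_sub_apply_le_mulVec {P : Matrix ι ι ℝ} (hP : ∀ i j, 0 ≤ P i j)
    (hrow : ∀ i, ∑ j, P i j ≤ 1) {x : ι → ℝ} {m : ι} (hxm : 0 ≤ x m)
    (hx : ∀ j ≠ m, x j = (P *ᵥ x) j) :
    (fun j => max (x j - x m) 0) ≤ P *ᵥ fun j => max (x j - x m) 0 := by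
  intro j
  have hPw : 0 ≤ (P *ᵥ fun j => max (x j - x m) 0) j :=
    sum_nonneg fun i _ => mul_nonneg (hP j i) (le_max_right _ _)
  refine max_le ?_ hPw
  rcases eq_or_ne j m with rfl | hj
  · simpa using hPw
  calc x j - x m ≤ (P *ᵥ x) j - (∑ i, P j i) * x m := by
        rw [hx j hj]
        gcongr
        exact mul_le_of_le_one_left hxm (hrow j)
    _ = ∑ i, P j i * (x i - x m) := by
        simp only [mulVec, dotProduct, mul_sub, sum_sub_distrib, sum_mul]
    _ ≤ (P *ᵥ fun j => max (x j - x m) 0) j :=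
        sum_le_sum fun i _ => mul_le_mul_of_nonneg_left (le_max_left _ _) (hP j i)

variable [DecidableEq ι]

theorem tendsto_pow_atTop_nhds_zero_of_forall_spectrum_map_ofReal_norm_lt_one
    {P : Matrix ι ι ℝ} (hP : ∀ μ ∈ spectrum ℂ (P.map (fun x => (x : ℂ))), ‖μ‖ < 1) :
    Tendsto (P ^ ·) atTop (𝓝 0) := by
  let _ := Matrix.linftyOpNormedRing (n := ι) (α := ℂ)
  let _ := Matrix.linftyOpNormedAlgebra (n := ι) (α := ℂ) (R := ℂ)
  have hQ := tendsto_pow_atTop_nhds_zero_of_forall_spectrum_norm_lt_one hP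
  have hre : Continuous fun M : Matrix ι ι ℂ => M.map Complex.re :=
    continuous_id.matrix_map Complex.continuous_re
  convert (hre.tendsto 0).comp hQ using 1
  · ext N : 1
    change P ^ N = (Complex.ofRealHom.mapMatrix P ^ N).map Complex.re
    rw [← map_pow]
    ext
    simp
  · simp

theorem det_one_sub_smul_ne_zero {P : Matrix ι ι ℝ}
    (hP : ∀ μ ∈ spectrum ℂ (P.map (fun x => (x : ℂ))), ‖μ‖ < 1) {t : ℝ} (ht₀ : 0 ≤ t)
    (ht₁ : t ≤ 1) : (1 - t • P).det ≠ 0 := by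
  have hunit := isUnit_one_sub_smul_of_forall_spectrum_norm_lt_one hP (t := t)
    (by rwa [Complex.norm_real, Real.norm_of_nonneg ht₀])
  have hmap : (1 - t • P).map (fun x => (x : ℂ)) = 1 - (t : ℂ) • P.map (fun x => (x : ℂ)) := by
    ext i j
    by_cases hij : i = j <;> simp [hij]
  rw [← hmap, isUnit_iff_isUnit_det, isUnit_iff_ne_zero] at hunit
  have hdet : ((1 - t • P).map fun x => (x : ℂ)).det = ((1 - t • P).det : ℂ) :=
    (RingHom.map_det Complex.ofRealHom _).symm
  exact_mod_cast hdet ▸ hunit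

theorem det_one_sub_pos {P : Matrix ι ι ℝ}
    (hP : ∀ μ ∈ spectrum ℂ (P.map (fun x => (x : ℂ))), ‖μ‖ < 1) : 0 < (1 - P).det := by
  have hcont : Continuous fun t : ℝ => (1 - t • P).det := by fun_prop
  by_contra! hneg
  obtain ⟨t, ⟨ht₀, ht₁⟩, hzero⟩ := intermediate_value_Icc' zero_le_one hcont.continuousOn
    (show (0 : ℝ) ∈ Set.Icc _ _ from ⟨by simpa using hneg, by simp⟩)
  exact det_one_sub_smul_ne_zero hP ht₀ ht₁ hzero

theorem nonsing_inv_one_sub_apply_nonneg {P : Matrix ι ι ℝ} (hP : ∀ i j, 0 ≤ P i j)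
    (hpow : Tendsto (P ^ ·) atTop (𝓝 0)) (hdet : IsUnit (1 - P).det) (i j : ι) :
    0 ≤ (1 - P)⁻¹ i j := by
  have hsum := tendsto_sum_range_pow_of_mul_one_sub_eq_one (nonsing_inv_mul _ hdet) hpow
  refine ge_of_tendsto' ((continuous_apply_apply i j).tendsto _ |>.comp hsum) fun N => ?_
  change 0 ≤ (∑ k ∈ range N, P ^ k) i j
  rw [sum_apply]
  exact sum_nonneg fun k _ => pow_apply_nonneg hP k i j

theorem nonpos_of_le_mulVec {P B : Matrix ι ι ℝ} (hB : ∀ i j, 0 ≤ B i j)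
    (hBP : B * (1 - P) = 1) {w : ι → ℝ} (hw : w ≤ P *ᵥ w) : w ≤ 0 := by
  have hw' : B *ᵥ (w - P *ᵥ w) = w := by
    rw [show w - P *ᵥ w = (1 - P) *ᵥ w by rw [sub_mulVec, one_mulVec], mulVec_mulVec, hBP,
      one_mulVec]
  intro i
  rw [← hw']
  exact sum_nonpos fun j _ => mul_nonpos_of_nonneg_of_nonpos (hB i j) (sub_nonpos.2 (hw j))

theorem nonsing_inv_one_sub_apply_le_apply_self {P : Matrix ι ι ℝ} (hP : ∀ i j, 0 ≤ P i j)
    (hrow : ∀ i, ∑ j, P i j ≤ 1) (hdet : IsUnit (1 - P).det)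
    (hB : ∀ i j, 0 ≤ (1 - P)⁻¹ i j) (l m : ι) : (1 - P)⁻¹ l m ≤ (1 - P)⁻¹ m m := by
  have hcol : ∀ j ≠ m, (1 - P)⁻¹ j m = (P *ᵥ fun i => (1 - P)⁻¹ i m) j := by
    intro j hj
    have := congrFun₂ (mul_nonsing_inv _ hdet) j m
    rwa [sub_mul, one_mul, sub_apply, one_apply_ne hj, sub_eq_zero] at this
  simpa using nonpos_of_le_mulVec hB (nonsing_inv_mul _ hdet)
    (max_sub_apply_le_mulVec (x := fun i => (1 - P)⁻¹ i m) hP hrow (hB m m) hcol) l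

theorem adjugate_eq_det_smul_nonsing_inv {R : Type*} [CommRing R] {A : Matrix ι ι R}
    (h : IsUnit A.det) : adjugate A = A.det • A⁻¹ := by
  rw [inv_def, smul_smul, Ring.mul_inverse_cancel _ h, one_smul]

end Matrix

/-- Let `P` be an `(n+1) × (n+1)` row substochastic matrix with spectral
radius strictly less than one, and let `M l m` denote the `(l,m)`-minor of `I - Pᵀ`
(the determinant of the matrix obtained from `I - Pᵀ` by deleting row `l` and
column `m`).  Then `(-1)^(l+m) * M l m ≤ M m m` for all indices `l`, `m`. -/
theorem neg_one_pow_mul_minor_le_diagonal_minor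
    {n : ℕ} (P : Matrix (Fin (n + 1)) (Fin (n + 1)) ℝ)
    (hnonneg : ∀ i j, 0 ≤ P i j)
    (hrowsum : ∀ i, ∑ j, P i j ≤ 1)
    (hspec : ∀ μ ∈ spectrum ℂ (P.map (fun x => (x : ℂ))), ‖μ‖ < 1)
    (l m : Fin (n + 1)) :
    (-1 : ℝ) ^ ((l : ℕ) + (m : ℕ)) *
        ((1 - Pᵀ).submatrix l.succAbove m.succAbove).det ≤
      ((1 - Pᵀ).submatrix m.succAbove m.succAbove).det := by
  have hdet : 0 < (1 - P).det := det_one_sub_pos hspec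
  have hunit : IsUnit (1 - P).det := hdet.ne'.isUnit
  have hinv_nonneg := nonsing_inv_one_sub_apply_nonneg hnonneg
    (tendsto_pow_atTop_nhds_zero_of_forall_spectrum_map_ofReal_norm_lt_one hspec) hunit
  have hminor : ∀ i j : Fin (n + 1), (-1 : ℝ) ^ ((i : ℕ) + (j : ℕ)) *
      ((1 - Pᵀ).submatrix i.succAbove j.succAbove).det = (1 - P).det * (1 - P)⁻¹ i j := by
    intro i j
    rw [← adjugate_fin_succ_eq_det_submatrix,
      show 1 - Pᵀ = (1 - P)ᵀ by rw [transpose_sub, transpose_one], ← adjugate_transpose,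
      transpose_apply, adjugate_eq_det_smul_nonsing_inv hunit, Matrix.smul_apply, smul_eq_mul]
  have hdiag := hminor m m
  rw [Even.neg_one_pow ⟨(m : ℕ), rfl⟩, one_mul] at hdiag
  rw [hminor, hdiag]
  exact mul_le_mul_of_nonneg_left
    (nonsing_inv_one_sub_apply_le_apply_self hnonneg hrowsum hunit hinv_nonneg l m)
    hdet.le
end

section
/- Let P = (p_{lm}) be an n×n row substochastic matrix (all entries nonnegative and each row sum at most 1) with spectral radius strictly less than one. Then for all indices l ≠ m: (1 − p_{mm}) f_{lm}((I−P)(m|m))⁻¹ p_{·m} / (1 − p_{mm} − p_{m·}((I−P)(m|m))⁻¹ p_{·m}) = p_{lm} / (1 − p_{ll} − p_{l·}((I−P)(l|l))⁻¹ p_{·l}) + Σ_{k≠l, k≠m} p_{km} f_{lk}((I−P)(k|k))⁻¹ p_{·k} / (1 − p_{kk} − p_{k·}((I−P)(k|k))⁻¹ p_{·k}). -/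
/-!
Let `B = (I - P)⁻¹`. By Gelfand's formula the Neumann series `∑ Pᵏ` converges, so `B ≥ 0` with
diagonal entries `≥ 1`; in particular `B k k ≠ 0`, so by the cofactor formula every principal
submatrix `(I - P)(k|k)` is invertible. Solving the `k`-th column of `(I - P) B = I` by
eliminating the `k`-th unknown shows that the denominator `Dₖ` of the identity is the Schur
complement `1 / B k k`, and that `f_{lk} ((I - P)(k|k))⁻¹ p_{·k} / Dₖ = B l k`. The identity is then
the `(l, m)` entry of `B (I - P) = I`.
-/

open Matrix

/-- The `l`-th column of `B` with its `l`-th entry deleted (a vector in `ℝⁿ`). -/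
def delCol {n : ℕ} (B : Matrix (Fin (n + 1)) (Fin (n + 1)) ℝ) (l : Fin (n + 1)) :
    Fin n → ℝ :=
  fun i => B (l.succAbove i) l

/-- The `l`-th row of `B` with its `l`-th entry deleted (a row vector in `ℝⁿ`). -/
def delRow {n : ℕ} (B : Matrix (Fin (n + 1)) (Fin (n + 1)) ℝ) (l : Fin (n + 1)) :
    Fin n → ℝ :=
  fun j => B l (l.succAbove j)

/-- `B(i|j)`: the matrix obtained from `B` by deleting row `i` and column `j`. -/
def delMat {n : ℕ} (B : Matrix (Fin (n + 1)) (Fin (n + 1)) ℝ) (i j : Fin (n + 1)) :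
    Matrix (Fin n) (Fin n) ℝ :=
  B.submatrix i.succAbove j.succAbove

/-- `f m l` (for `m ≠ l`): the standard basis row vector of `ℝⁿ` selecting the
coordinate corresponding to the original index `m` after index `l` has been deleted;
it equals `eₘ` if `m < l` and `e_{m-1}` if `m > l`. -/
def fSel {n : ℕ} (m l : Fin (n + 1)) : Fin n → ℝ :=
  fun j => if l.succAbove j = m then 1 else 0

open Filter

theorem summable_norm_pow_of_spectralRadius_lt_one {A : Type*} [NormedRing A] [NormedAlgebra ℂ A]
    [CompleteSpace A] {a : A} (ha : spectralRadius ℂ a < 1) : Summable (‖a ^ ·‖) := by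
  obtain ⟨r, hρr, hr1⟩ := exists_between ha
  have hroot : ∀ᶠ n : ℕ in atTop, ENNReal.ofReal (‖a ^ n‖ ^ (1 / n : ℝ)) < r :=
    (spectrum.pow_norm_pow_one_div_tendsto_nhds_spectralRadius a).eventually_lt_const hρr
  refine .of_norm_bounded_eventually_nat (summable_geometric_of_lt_one ENNReal.toReal_nonneg
    (ENNReal.toReal_lt_of_lt_ofReal (by simpa using hr1))) ?_
  filter_upwards [hroot, eventually_ne_atTop 0] with n hn hn0
  rw [ENNReal.ofReal_lt_iff_lt_toReal (by positivity) hr1.ne_top, one_div] at hn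
  calc ‖‖a ^ n‖‖ = (‖a ^ n‖ ^ (n⁻¹ : ℝ)) ^ n := by
        rw [norm_norm, Real.rpow_inv_natCast_pow (norm_nonneg _) hn0]
    _ ≤ r.toReal ^ n := pow_le_pow_left₀ (by positivity) hn.le n

namespace Matrix

variable {ι : Type*} [Fintype ι]

section LinftyOpNorm

attribute [local instance] Matrix.linftyOpNormedAddCommGroup Matrix.linftyOpNormedRing
  Matrix.linftyOpNormedAlgebra

theorem linfty_opNorm_map_ofReal {κ : Type*} [Fintype κ] (M : Matrix ι κ ℝ) :
    ‖M.map ((↑) : ℝ → ℂ)‖ = ‖M‖ := by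
  simp [linfty_opNorm_def]

theorem summable_pow_of_forall_spectrum_norm_lt_one [DecidableEq ι] [Nonempty ι]
    {P : Matrix ι ι ℝ} (hspec : ∀ μ ∈ spectrum ℂ (P.map ((↑) : ℝ → ℂ)), ‖μ‖ < 1) :
    Summable (P ^ ·) := by
  have hρ : spectralRadius ℂ (P.map ((↑) : ℝ → ℂ)) < 1 := by
    simpa using spectrum.spectralRadius_lt_of_forall_lt _ (r := 1)
      fun μ hμ => by simpa [← NNReal.coe_lt_coe] using hspec μ hμ
  have hmap (k : ℕ) : P.map ((↑) : ℝ → ℂ) ^ k = (P ^ k).map (↑) :=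
    (Complex.ofRealHom.mapMatrix.map_pow P k).symm
  refine .of_norm ?_
  simpa [hmap, linfty_opNorm_map_ofReal] using summable_norm_pow_of_spectralRadius_lt_one hρ

end LinftyOpNorm

variable [DecidableEq ι]

theorem inv_one_sub_eq_tsum_pow {P : Matrix ι ι ℝ} (hs : Summable (P ^ ·)) :
    (1 - P)⁻¹ = ∑' k, P ^ k :=
  inv_eq_right_inv hs.one_sub_mul_tsum_pow

theorem one_le_inv_one_sub_apply_self {P : Matrix ι ι ℝ} (hP : ∀ i j, 0 ≤ P i j)
    (hs : Summable (P ^ ·)) (i : ι) : 1 ≤ (1 - P)⁻¹ i i := by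
  have hdiag := Pi.hasSum.1 hs.hasSum.matrix_diag i
  rw [inv_one_sub_eq_tsum_pow hs]
  simpa using le_hasSum hdiag 0 fun k _ => pow_apply_nonneg hP k i i

theorem one_sub_apply_self_mul_apply {R : Type*} [CommRing R] {P B : Matrix ι ι R}
    (hB : B * (1 - P) = 1) {l m : ι} (hlm : l ≠ m) :
    (1 - P m m) * B l m = P l m * B l l + ∑ k ∈ (Finset.univ.erase l).erase m, P k m * B l k := by
  have hentry := congrFun (congrFun hB l) m
  rw [Matrix.mul_sub, Matrix.mul_one, sub_apply, one_apply_ne hlm, sub_eq_zero, mul_apply,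
    ← Finset.add_sum_erase _ _ (Finset.mem_univ m), ← Finset.add_sum_erase _ _
      (Finset.mem_erase.2 ⟨hlm, Finset.mem_univ l⟩), Finset.erase_right_comm] at hentry
  simp only [mul_comm (P _ m)]
  linear_combination hentry

theorem mul_apply_eq_add_sum_succAbove {n : ℕ} {R : Type*} [NonUnitalNonAssocSemiring R]
    (M B : Matrix (Fin (n + 1)) (Fin (n + 1)) R) (i k : Fin (n + 1)) :
    (M * B) i k = M i k * B k k + ∑ j, M i (k.succAbove j) * B (k.succAbove j) k := by
  rw [mul_apply, Fin.sum_univ_succAbove _ k]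

end Matrix

section Minors

variable {n : ℕ}

theorem fSel_succAbove_dotProduct (k : Fin (n + 1)) (j : Fin n) (v : Fin n → ℝ) :
    fSel (k.succAbove j) k ⬝ᵥ v = v j := by
  simp [fSel, dotProduct]

theorem delCol_one_sub (P : Matrix (Fin (n + 1)) (Fin (n + 1)) ℝ) (k : Fin (n + 1)) :
    delCol (1 - P) k = -delCol P k := by
  ext j
  simp [delCol, one_apply_ne (Fin.succAbove_ne k j)]

theorem delRow_one_sub (P : Matrix (Fin (n + 1)) (Fin (n + 1)) ℝ) (k : Fin (n + 1)) :
    delRow (1 - P) k = -delRow P k := by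
  ext j
  simp [delRow, one_apply_ne (Fin.succAbove_ne k j).symm]

-- `M⁻¹ k k` is the `(k, k)` cofactor `det M(k|k)` divided by `det M`.
theorem det_delMat_ne_zero_of_inv_apply_self_ne_zero {M : Matrix (Fin (n + 1)) (Fin (n + 1)) ℝ}
    {k : Fin (n + 1)} (hk : M⁻¹ k k ≠ 0) : (delMat M k k).det ≠ 0 := by
  contrapose! hk
  rw [inv_def, Matrix.smul_apply, adjugate_fin_succ_eq_det_submatrix, ← delMat, hk]
  simp

variable {M : Matrix (Fin (n + 1)) (Fin (n + 1)) ℝ} (hM : IsUnit M.det) (k : Fin (n + 1))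
include hM

theorem delMat_mulVec_delCol_inv : delMat M k k *ᵥ delCol M⁻¹ k = -(M⁻¹ k k • delCol M k) := by
  ext j
  have hrow := mul_apply_eq_add_sum_succAbove M M⁻¹ (k.succAbove j) k
  rw [mul_nonsing_inv M hM, one_apply_ne (Fin.succAbove_ne k j)] at hrow
  simp only [mulVec, dotProduct, delMat, delCol, submatrix_apply, Pi.neg_apply, Pi.smul_apply,
    smul_eq_mul]
  linear_combination -hrow

theorem apply_self_mul_inv_apply_self_add_delRow_dotProduct :
    M k k * M⁻¹ k k + delRow M k ⬝ᵥ delCol M⁻¹ k = 1 := by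
  simpa [mul_nonsing_inv M hM, delRow, delCol, dotProduct] using
    (mul_apply_eq_add_sum_succAbove M M⁻¹ k k).symm

variable (hk : IsUnit (delMat M k k).det)
include hk

theorem delCol_inv_eq : delCol M⁻¹ k = -(M⁻¹ k k • ((delMat M k k)⁻¹ *ᵥ delCol M k)) := by
  rw [← mulVec_smul, ← mulVec_neg, ← delMat_mulVec_delCol_inv hM, mulVec_mulVec,
    nonsing_inv_mul _ hk, one_mulVec]

theorem inv_apply_self_mul_schur :
    M⁻¹ k k * (M k k - delRow M k ⬝ᵥ ((delMat M k k)⁻¹ *ᵥ delCol M k)) = 1 := by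
  have h := apply_self_mul_inv_apply_self_add_delRow_dotProduct hM k
  rw [delCol_inv_eq hM k hk, dotProduct_neg, dotProduct_smul, smul_eq_mul] at h
  linear_combination h

end Minors

section OneSub

variable {n : ℕ} {P : Matrix (Fin (n + 1)) (Fin (n + 1)) ℝ} (hP : IsUnit (1 - P).det)
  {k : Fin (n + 1)} (hk : (1 - P)⁻¹ k k ≠ 0)
include hP hk

theorem schur_one_sub_eq_inv :
    1 - P k k - delRow P k ⬝ᵥ ((delMat (1 - P) k k)⁻¹ *ᵥ delCol P k) = ((1 - P)⁻¹ k k)⁻¹ := by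
  have hk' := isUnit_iff_ne_zero.2 (det_delMat_ne_zero_of_inv_apply_self_ne_zero hk)
  refine eq_inv_of_mul_eq_one_right ?_
  have h := inv_apply_self_mul_schur hP k hk'
  rwa [delRow_one_sub, delCol_one_sub, mulVec_neg, neg_dotProduct, dotProduct_neg, neg_neg,
    Matrix.sub_apply, one_apply_eq] at h

theorem fSel_dotProduct_div_schur_one_sub {l : Fin (n + 1)} (hlk : l ≠ k) :
    fSel l k ⬝ᵥ ((delMat (1 - P) k k)⁻¹ *ᵥ delCol P k) /
        (1 - P k k - delRow P k ⬝ᵥ ((delMat (1 - P) k k)⁻¹ *ᵥ delCol P k)) = (1 - P)⁻¹ l k := by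
  have hk' := isUnit_iff_ne_zero.2 (det_delMat_ne_zero_of_inv_apply_self_ne_zero hk)
  obtain ⟨j, rfl⟩ := Fin.exists_succAbove_eq hlk
  have hcol := congrFun (delCol_inv_eq hP k hk') j
  simp only [delCol_one_sub, mulVec_neg, Pi.neg_apply, smul_neg, neg_neg, Pi.smul_apply,
    smul_eq_mul] at hcol
  rw [schur_one_sub_eq_inv hP hk, fSel_succAbove_dotProduct, div_inv_eq_mul, mul_comm]
  exact hcol.symm

end OneSub

theorem substochastic_second_identity_general
    {n : ℕ} (P : Matrix (Fin (n + 1)) (Fin (n + 1)) ℝ)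
    (hnonneg : ∀ i j, 0 ≤ P i j)
    (hspec : ∀ μ ∈ spectrum ℂ (P.map (fun x => (x : ℂ))), ‖μ‖ < 1)
    (l m : Fin (n + 1)) (hlm : l ≠ m) :
    (1 - P m m) * (fSel l m ⬝ᵥ ((delMat (1 - P) m m)⁻¹ *ᵥ delCol P m)) /
        (1 - P m m - delRow P m ⬝ᵥ ((delMat (1 - P) m m)⁻¹ *ᵥ delCol P m)) =
      P l m / (1 - P l l - delRow P l ⬝ᵥ ((delMat (1 - P) l l)⁻¹ *ᵥ delCol P l)) +
        ∑ k ∈ (Finset.univ.erase l).erase m,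
          P k m * (fSel l k ⬝ᵥ ((delMat (1 - P) k k)⁻¹ *ᵥ delCol P k)) /
            (1 - P k k - delRow P k ⬝ᵥ ((delMat (1 - P) k k)⁻¹ *ᵥ delCol P k)) := by
  have hs := Matrix.summable_pow_of_forall_spectrum_norm_lt_one hspec
  have hdet : IsUnit (1 - P).det := isUnit_det_of_right_inverse hs.one_sub_mul_tsum_pow
  have hdiag (k : Fin (n + 1)) : (1 - P)⁻¹ k k ≠ 0 :=
    (zero_lt_one.trans_le (Matrix.one_le_inv_one_sub_apply_self hnonneg hs k)).ne'
  rw [mul_div_assoc, fSel_dotProduct_div_schur_one_sub hdet (hdiag m) hlm,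
    schur_one_sub_eq_inv hdet (hdiag l), div_inv_eq_mul]
  rw [Finset.sum_congr rfl fun k hk => by
    rw [mul_div_assoc, fSel_dotProduct_div_schur_one_sub hdet (hdiag k)
      (Finset.ne_of_mem_erase (Finset.mem_of_mem_erase hk)).symm]]
  exact Matrix.one_sub_apply_self_mul_apply (nonsing_inv_mul _ hdet) hlm

/-- For a row substochastic matrix `P` with spectral radius less than
one and indices `l ≠ m`:
`(1 − p_{mm}) f_{lm}((I−P)(m|m))⁻¹p_{·m} / (1 − p_{mm} − p_{m·}((I−P)(m|m))⁻¹p_{·m})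
  = p_{lm} / (1 − p_{ll} − p_{l·}((I−P)(l|l))⁻¹p_{·l})
    + ∑_{k≠l,k≠m} p_{km} f_{lk}((I−P)(k|k))⁻¹p_{·k} /
        (1 − p_{kk} − p_{k·}((I−P)(k|k))⁻¹p_{·k})`. -/
theorem substochastic_second_identity
    {n : ℕ} (P : Matrix (Fin (n + 1)) (Fin (n + 1)) ℝ)
    (hnonneg : ∀ i j, 0 ≤ P i j)
    (hrowsum : ∀ i, ∑ j, P i j ≤ 1)
    (hspec : ∀ μ ∈ spectrum ℂ (P.map (fun x => (x : ℂ))), ‖μ‖ < 1)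
    (l m : Fin (n + 1)) (hlm : l ≠ m) :
    (1 - P m m) * (fSel l m ⬝ᵥ ((delMat (1 - P) m m)⁻¹ *ᵥ delCol P m)) /
        (1 - P m m - delRow P m ⬝ᵥ ((delMat (1 - P) m m)⁻¹ *ᵥ delCol P m)) =
      P l m / (1 - P l l - delRow P l ⬝ᵥ ((delMat (1 - P) l l)⁻¹ *ᵥ delCol P l)) +
        ∑ k ∈ (Finset.univ.erase l).erase m,
          P k m * (fSel l k ⬝ᵥ ((delMat (1 - P) k k)⁻¹ *ᵥ delCol P k)) /
            (1 - P k k - delRow P k ⬝ᵥ ((delMat (1 - P) k k)⁻¹ *ᵥ delCol P k)) :=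
  substochastic_second_identity_general P hnonneg hspec l m hlm
end

section
/- Let B = (b_{ij}) be an n×n real matrix and let l ≠ m be indices. Then −b_{mm} f_{lm} · adj(B(m|m)) · b_{·m} = −b_{lm} det(B(l|l)) + Σ_{k≠l, k≠m} b_{km} f_{lk} · adj(B(k|k)) · b_{·k}. -/
/-! The vector `adj(B(k|k)) · b_{·k}` solves the Cramer system `B(k|k) x = b_{·k}`, so its
coordinate at `l` is the determinant of `B(k|k)` with one column replaced by `b_{·k}`. That
matrix is the principal minor at `k` of `B` with columns `l` and `k` swapped, hence the
coordinate equals `-adj(B)_{lk}`. The identity then says that row `l` of `adj(B) · B`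
vanishes in column `m ≠ l`. -/

open Matrix

theorem Matrix.adjugate_submatrix_swap_apply_self {ι R : Type*} [Fintype ι] [DecidableEq ι]
    [CommRing R] (A : Matrix ι ι R) {i j : ι} (hij : i ≠ j) :
    (A.submatrix id (Equiv.swap i j)).adjugate j j = -A.adjugate i j := by
  have hrow : (A.submatrix id (Equiv.swap i j)).updateRow j (Pi.single j 1) =
      (A.updateRow j (Pi.single i 1)).submatrix id (Equiv.swap i j) := by
    ext r c
    by_cases hr : r = j
    · subst hr
      simp only [updateRow_self, submatrix_apply, id_eq, Pi.single_apply,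
        Equiv.swap_apply_eq_iff, Equiv.swap_apply_left]
    · simp only [updateRow_ne hr, submatrix_apply, id_eq]
  rw [adjugate_apply, hrow, det_permute', Equiv.Perm.sign_swap hij, adjugate_apply]
  simp

lemma adjugate_apply_self_eq_det_delMat {n : ℕ} (B : Matrix (Fin (n + 1)) (Fin (n + 1)) ℝ)
    (k : Fin (n + 1)) : B.adjugate k k = (delMat B k k).det := by
  rw [adjugate_fin_succ_eq_det_submatrix, ← two_mul, pow_mul, neg_one_sq, one_pow, one_mul]
  rfl

lemma fSel_eq_single {n : ℕ} {l k : Fin (n + 1)} {j : Fin n} (hj : k.succAbove j = l) :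
    fSel l k = Pi.single j 1 := by
  funext j'
  simp only [fSel, Pi.single_apply, ← hj, Fin.succAbove_right_inj]

lemma updateCol_delMat_delCol {n : ℕ} (B : Matrix (Fin (n + 1)) (Fin (n + 1)) ℝ)
    {l k : Fin (n + 1)} {j : Fin n} (hj : k.succAbove j = l) :
    (delMat B k k).updateCol j (delCol B k) = delMat (B.submatrix id (Equiv.swap l k)) k k := by
  ext i j'
  by_cases h : j' = j
  · subst h
    simp [delMat, delCol, hj]
  · have hl : k.succAbove j' ≠ l := by rwa [← hj, Ne, Fin.succAbove_right_inj]
    simp [delMat, h, Equiv.swap_apply_of_ne_of_ne hl (Fin.succAbove_ne k j')]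

lemma fSel_dotProduct_adjugate_mulVec_delCol {n : ℕ} (B : Matrix (Fin (n + 1)) (Fin (n + 1)) ℝ)
    {l k : Fin (n + 1)} (hlk : l ≠ k) :
    fSel l k ⬝ᵥ ((delMat B k k).adjugate *ᵥ delCol B k) = -B.adjugate l k := by
  obtain ⟨j, hj⟩ := Fin.exists_succAbove_eq hlk
  rw [fSel_eq_single hj, single_dotProduct, one_mul, ← cramer_eq_adjugate_mulVec, cramer_apply,
    updateCol_delMat_delCol B hj, ← adjugate_apply_self_eq_det_delMat,
    adjugate_submatrix_swap_apply_self B hlk]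

/-- For an `(n+1) × (n+1)` real matrix `B` and indices `l ≠ m`:
`−b_{mm} f_{lm} · adj(B(m|m)) · b_{·m}
  = −b_{lm} det B(l|l) + ∑_{k≠l,k≠m} b_{km} f_{lk} · adj(B(k|k)) · b_{·k}`. -/
theorem neg_diag_fSel_adjugate_identity
    {n : ℕ} (B : Matrix (Fin (n + 1)) (Fin (n + 1)) ℝ)
    (l m : Fin (n + 1)) (hlm : l ≠ m) :
    -(B m m * (fSel l m ⬝ᵥ ((delMat B m m).adjugate *ᵥ delCol B m))) =
      -(B l m * (delMat B l l).det) +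
        ∑ k ∈ (Finset.univ.erase l).erase m,
          B k m * (fSel l k ⬝ᵥ ((delMat B k k).adjugate *ᵥ delCol B k)) := by
  have hrow : ∑ k, B.adjugate l k * B k m = 0 := by
    simpa [mul_apply, one_apply, hlm] using congrFun (congrFun (adjugate_mul B) l) m
  have hm : m ∈ Finset.univ.erase l := Finset.mem_erase.mpr ⟨hlm.symm, Finset.mem_univ m⟩
  rw [← Finset.add_sum_erase _ _ (Finset.mem_univ l), ← Finset.add_sum_erase _ _ hm] at hrow
  have hterm : ∀ k ∈ (Finset.univ.erase l).erase m,
      B k m * (fSel l k ⬝ᵥ ((delMat B k k).adjugate *ᵥ delCol B k)) =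
        -(B.adjugate l k * B k m) := by
    intro k hk
    rw [fSel_dotProduct_adjugate_mulVec_delCol B (Finset.ne_of_mem_erase
      (Finset.mem_of_mem_erase hk)).symm]
    ring
  rw [Finset.sum_congr rfl hterm, Finset.sum_neg_distrib,
    fSel_dotProduct_adjugate_mulVec_delCol B hlm, ← adjugate_apply_self_eq_det_delMat]
  linear_combination hrow
end
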